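/- arXiv:math/0410021 — 2 statements merged into one kernel-verified Lean document; each statement's English description precedes it below -/
import Mathlib

section
/- Let x ∈ ℝ^d and let C be an open cone with apex x and angular radius π/6, i.e. C = {y ∈ ℝ^d \ {x} : the angle between y − x and a fixed unit vector u is strictly less than π/6}. Then for all y, z ∈ C one has |z − y| < max(|z − x|, |y − x|). -/
/-!
By the triangle inequality for angles, two vectors inside a cone of angular radius `π / 6`
make an angle less than `π / 3` with each other. For such vectors `v, w` the law of cosines
gives `‖w - v‖² < ‖v‖² + ‖w‖² - ‖v‖ ‖w‖ ≤ max ‖v‖ ‖w‖ ^ 2`.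
-/

open Real InnerProductGeometry

variable {V : Type*} [NormedAddCommGroup V] [InnerProductSpace ℝ V]

lemma sq_add_sq_sub_mul_le_max_sq {a b : ℝ} (ha : 0 ≤ a) (hb : 0 ≤ b) :
    a ^ 2 + b ^ 2 - a * b ≤ max a b ^ 2 := by
  rcases le_total a b with h | h
  · rw [max_eq_right h]; nlinarith
  · rw [max_eq_left h]; nlinarith

theorem norm_sub_lt_max_of_angle_lt_pi_div_three {v w : V} (h : angle v w < π / 3) :
    ‖w - v‖ < max ‖w‖ ‖v‖ := by
  have hv : v ≠ 0 := by
    rintro rfl; rw [angle_zero_left] at h; linarith [pi_pos]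
  have hw : w ≠ 0 := by
    rintro rfl; rw [angle_zero_right] at h; linarith [pi_pos]
  have hcos : 1 / 2 < cos (angle v w) := by
    rw [← cos_pi_div_three]
    exact strictAntiOn_cos ⟨angle_nonneg v w, angle_le_pi v w⟩
      ⟨by positivity, by linarith [pi_pos]⟩ h
  have hnorms : 0 < ‖w‖ * ‖v‖ := by positivity
  have hlaw := norm_sub_sq_eq_norm_sq_add_norm_sq_sub_two_mul_norm_mul_norm_mul_cos_angle w v
  rw [angle_comm] at hlaw
  refine lt_of_pow_lt_pow_left₀ 2 (le_max_of_le_left (norm_nonneg w)) ?_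
  calc ‖w - v‖ ^ 2 < ‖w‖ ^ 2 + ‖v‖ ^ 2 - ‖w‖ * ‖v‖ := by nlinarith
    _ ≤ max ‖w‖ ‖v‖ ^ 2 := sq_add_sq_sub_mul_le_max_sq (norm_nonneg w) (norm_nonneg v)

theorem stmt1_general (d : ℕ) (x u : EuclideanSpace ℝ (Fin d))
    (C : Set (EuclideanSpace ℝ (Fin d)))
    (hC : C = {y | y ≠ x ∧ InnerProductGeometry.angle (y - x) u < π / 6})
    (y z : EuclideanSpace ℝ (Fin d)) (hy : y ∈ C) (hz : z ∈ C) :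
    ‖z - y‖ < max ‖z - x‖ ‖y - x‖ := by
  subst hC
  have hangle : angle (y - x) (z - x) < π / 3 := by
    calc angle (y - x) (z - x) ≤ angle (y - x) u + angle u (z - x) :=
          angle_le_angle_add_angle _ _ _
      _ < π / 6 + π / 6 := by rw [angle_comm u]; exact add_lt_add hy.2 hz.2
      _ = π / 3 := by ring
  simpa using norm_sub_lt_max_of_angle_lt_pi_div_three hangle

theorem stmt1 (d : ℕ) (x u : EuclideanSpace ℝ (Fin d)) (hu : ‖u‖ = 1)
    (C : Set (EuclideanSpace ℝ (Fin d)))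
    (hC : C = {y | y ≠ x ∧ InnerProductGeometry.angle (y - x) u < π / 6})
    (y z : EuclideanSpace ℝ (Fin d)) (hy : y ∈ C) (hz : z ∈ C) :
    ‖z - y‖ < max ‖z - x‖ ‖y - x‖ :=
  stmt1_general d x u C hC y z hy hz
end

section
/- Let B₀ ⊆ ℝ^d be bounded and convex with positive Lebesgue measure. Then the infimum over all pairs of distinct points x, y ∈ B₀ of vol(C_{x,y} ∩ B_{|y−x|}(x) ∩ B₀)/|y − x|^d is strictly positive, where C_{x,y} is the closed cone with apex x, angular radius π/12, centred on the half-line from x through y. -/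
/-!
A convex set of positive volume contains a ball `ball z ρ` and lies in some `closedBall z R`.
Given `x ≠ y` in `B₀` with `r = ‖y - x‖`, a ball of radius `r sin θ / 2` around the midpoint of
`x` and `y` lies in the cone `C_{x,y}` and in `closedBall x r`. Shrinking `ball z ρ` towards the
midpoint by the factor `r sin θ / (2 (ρ + R))` keeps it inside `B₀` by convexity and moves it into
that ball, so the set in question contains a ball of radius proportional to `r`, with a
constant independent of `x` and `y`.
-/
open Real Metric MeasureTheory InnerProductGeometry
open Module (finrank)
open scoped RealInnerProductSpace Pointwise

section Angle
variable {E : Type*} [NormedAddCommGroup E] [InnerProductSpace ℝ E]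

theorem InnerProductGeometry.angle_le_of_norm_sub_le_mul_sin {a b : E} {θ : ℝ} (hθ₀ : 0 ≤ θ)
    (hθ : θ < π / 2) (hb : b ≠ 0) (h : ‖a - b‖ ≤ ‖b‖ * sin θ) : angle a b ≤ θ := by
  have hsin : sin θ < 1 := by
    rw [← sin_pi_div_two]
    exact sin_lt_sin_of_lt_of_le_pi_div_two (by linarith) le_rfl hθ
  have hsin₀ : 0 ≤ sin θ := sin_nonneg_of_nonneg_of_le_pi hθ₀ (by linarith)
  have hb₀ : 0 < ‖b‖ := norm_pos_iff.2 hb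
  have hsub : ‖a - b‖ ^ 2 ≤ (‖b‖ * sin θ) ^ 2 := pow_le_pow_left₀ (norm_nonneg _) h 2
  have hexp : ‖a - b‖ ^ 2 = ‖a‖ ^ 2 - 2 * ⟪a, b⟫ + ‖b‖ ^ 2 := norm_sub_sq_real a b
  have ha : a ≠ 0 := by
    rintro rfl
    rw [zero_sub, norm_neg] at h
    nlinarith
  have ha₀ : 0 < ‖a‖ := norm_pos_iff.2 ha
  have hab : ‖a - b‖ ≤ ‖b‖ := h.trans (mul_le_of_le_one_right hb₀.le hsin.le)
  have hright : angle a b ≤ π / 2 :=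
    arccos_le_pi_div_two.2 (div_nonneg (by nlinarith [norm_nonneg (a - b)]) (by positivity))
  -- The Gram determinant of `a, b` equals that of `a, a - b`.
  have hgram : ⟪a, a⟫ * ⟪b, b⟫ - ⟪a, b⟫ * ⟪a, b⟫ ≤ (sin θ * (‖a‖ * ‖b‖)) ^ 2 := by
    have := real_inner_mul_inner_self_le a (a - b)
    simp only [real_inner_self_eq_norm_sq, inner_sub_right] at this ⊢
    nlinarith [mul_le_mul_of_nonneg_left hsub (sq_nonneg ‖a‖)]
  have hsin_le : sin (angle a b) ≤ sin θ := by
    refine le_of_mul_le_mul_right ?_ (mul_pos ha₀ hb₀)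
    rw [sin_angle_mul_norm_mul_norm]
    exact sqrt_le_iff.2 ⟨by positivity, hgram⟩
  exact (strictMonoOn_sin.le_iff_le ⟨by linarith [angle_nonneg a b], hright⟩
    ⟨by linarith, hθ.le⟩).1 hsin_le

theorem ball_midpoint_subset_cone_inter_closedBall {x y : E} {θ : ℝ} (hθ₀ : 0 ≤ θ)
    (hθ : θ < π / 2) (hxy : x ≠ y) :
    ball (midpoint ℝ x y) (‖y - x‖ * sin θ / 2) ⊆
      {w | angle (w - x) (y - x) ≤ θ} ∩ closedBall x ‖y - x‖ := by
  intro w hw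
  rw [mem_ball, dist_eq_norm] at hw
  have hmx : midpoint ℝ x y - x = (2⁻¹ : ℝ) • (y - x) := by
    rw [midpoint_sub_left, invOf_eq_inv]
  have hnorm : ‖midpoint ℝ x y - x‖ = ‖y - x‖ / 2 := by
    rw [hmx, norm_smul]; norm_num; ring
  refine ⟨?_, ?_⟩
  · show angle (w - x) (y - x) ≤ θ
    rw [← angle_smul_right_of_pos _ _ (by norm_num : (0 : ℝ) < 2⁻¹), ← hmx]
    refine angle_le_of_norm_sub_le_mul_sin hθ₀ hθ ?_ ?_
    · rw [hmx]; exact smul_ne_zero (by norm_num) (sub_ne_zero.2 hxy.symm)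
    · rw [sub_sub_sub_cancel_right, hnorm]; linarith
  · rw [mem_closedBall, dist_eq_norm]
    calc ‖w - x‖ ≤ ‖w - midpoint ℝ x y‖ + ‖midpoint ℝ x y - x‖ :=
          norm_sub_le_norm_sub_add_norm_sub _ _ _
      _ ≤ ‖y - x‖ * sin θ / 2 + ‖y - x‖ / 2 := by rw [hnorm]; linarith
      _ ≤ ‖y - x‖ := by nlinarith [sin_le_one θ, norm_nonneg (y - x)]

end Angle

section Convex
variable {E : Type*} [NormedAddCommGroup E] [NormedSpace ℝ E] {s : Set E}

theorem Convex.ball_lineMap_subset (hs : Convex ℝ s) {m z : E} {ρ t : ℝ} (hm : m ∈ s)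
    (hball : ball z ρ ⊆ s) (ht₀ : 0 < t) (ht₁ : t ≤ 1) :
    ball (AffineMap.lineMap m z t) (t * ρ) ⊆ s := by
  have hcombo : (1 - t) • {m} + t • ball z ρ ⊆ s :=
    (Set.add_subset_add (Set.smul_set_mono (Set.singleton_subset_iff.2 hm))
      (Set.smul_set_mono hball)).trans
      (hs.set_combo_subset (sub_nonneg.2 ht₁) ht₀.le (sub_add_cancel 1 t))
  rwa [Set.smul_set_singleton, _root_.smul_ball ht₀.ne', singleton_add_ball,
    Real.norm_of_nonneg ht₀.le, ← AffineMap.lineMap_apply_module] at hcombo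

theorem Convex.exists_ball_subset_inter_ball (hs : Convex ℝ s) {m z : E} {ρ R δ : ℝ}
    (hm : m ∈ s) (hball : ball z ρ ⊆ s) (hmz : dist m z ≤ R) (hδ₀ : 0 < δ) (hδ : δ ≤ ρ + R) :
    ∃ p, ball p (δ * ρ / (ρ + R)) ⊆ s ∩ ball m δ := by
  set t := δ / (ρ + R)
  have ht₀ : 0 < t := div_pos hδ₀ (hδ₀.trans_le hδ)
  have ht₁ : t ≤ 1 := (div_le_one (hδ₀.trans_le hδ)).2 hδ
  have hρR : t * (ρ + R) = δ := div_mul_cancel₀ δ (hδ₀.trans_le hδ).ne'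
  refine ⟨AffineMap.lineMap m z t, fun w hw => ?_⟩
  rw [← div_mul_eq_mul_div] at hw
  refine ⟨hs.ball_lineMap_subset hm hball ht₀ ht₁ hw, ?_⟩
  rw [mem_ball] at hw ⊢
  calc dist w m ≤ dist w (AffineMap.lineMap m z t) + dist (AffineMap.lineMap m z t) m :=
        dist_triangle _ _ _
    _ < t * ρ + t * R := by
        rw [dist_lineMap_left, Real.norm_of_nonneg ht₀.le]
        exact add_lt_add_of_lt_of_le hw (mul_le_mul_of_nonneg_left hmz ht₀.le)
    _ = δ := by rw [← mul_add, hρR]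

theorem Convex.interior_nonempty_of_measure_ne_zero [MeasurableSpace E] [BorelSpace E]
    [FiniteDimensional ℝ E] (hs : Convex ℝ s) (μ : Measure E) [μ.IsAddHaarMeasure]
    (h : μ s ≠ 0) : (interior s).Nonempty := by
  rw [Set.nonempty_iff_ne_empty]
  intro hint
  refine h (measure_mono_null ?_ (hs.addHaar_frontier μ))
  rw [frontier, hint, Set.sdiff_empty]
  exact subset_closure

end Convex

section Measure
variable {E : Type*} [NormedAddCommGroup E] [InnerProductSpace ℝ E] [FiniteDimensional ℝ E]
  [MeasurableSpace E] [BorelSpace E] (μ : Measure E) [μ.IsAddHaarMeasure]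

theorem Convex.le_measureReal_cone_inter_closedBall_inter {s : Set E} (hs : Convex ℝ s)
    {z : E} {ρ R θ : ℝ} (hρ : 0 < ρ) (hball : ball z ρ ⊆ s) (hsR : s ⊆ closedBall z R)
    (hθ₀ : 0 < θ) (hθ : θ < π / 2) {x y : E} (hx : x ∈ s) (hy : y ∈ s) (hxy : x ≠ y) :
    (ρ * sin θ / (2 * (ρ + R))) ^ finrank ℝ E * μ.real (ball 0 1) * ‖y - x‖ ^ finrank ℝ E ≤
      μ.real (({x} ∪ {w | angle (w - x) (y - x) ≤ θ}) ∩ closedBall x ‖y - x‖ ∩ s) := by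
  set δ := ‖y - x‖ * sin θ / 2
  have hsin : 0 < sin θ := sin_pos_of_pos_of_lt_pi hθ₀ (by linarith)
  have hδ₀ : 0 < δ := by
    have := norm_pos_iff.2 (sub_ne_zero.2 hxy.symm); positivity
  have hδ : δ ≤ ρ + R := by
    have hyx : ‖y - x‖ ≤ 2 * R := by
      rw [← dist_eq_norm]
      linarith [dist_triangle_right y x z, mem_closedBall.1 (hsR hx), mem_closedBall.1 (hsR hy)]
    have := mul_le_mul_of_nonneg_left (sin_le_one θ) (norm_nonneg (y - x))
    simp only [δ]
    linarith
  obtain ⟨p, hp⟩ := hs.exists_ball_subset_inter_ball (hs.midpoint_mem hx hy) hball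
    (mem_closedBall.1 (hsR (hs.midpoint_mem hx hy))) hδ₀ hδ
  have hsub : ball p (δ * ρ / (ρ + R)) ⊆
      ({x} ∪ {w | angle (w - x) (y - x) ≤ θ}) ∩ closedBall x ‖y - x‖ ∩ s := by
    intro w hw
    obtain ⟨hcone, hclosed⟩ := ball_midpoint_subset_cone_inter_closedBall hθ₀.le hθ hxy (hp hw).2
    exact ⟨⟨Or.inr hcone, hclosed⟩, (hp hw).1⟩
  have hfin : μ (({x} ∪ {w | angle (w - x) (y - x) ≤ θ}) ∩ closedBall x ‖y - x‖ ∩ s) ≠ ⊤ :=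
    ((measure_mono (Set.inter_subset_right.trans hsR)).trans_lt measure_closedBall_lt_top).ne
  have hρR : 0 < ρ + R := hδ₀.trans_le hδ
  calc _ = (δ * ρ / (ρ + R)) ^ finrank ℝ E * μ.real (ball 0 1) := by
        rw [mul_right_comm, ← mul_pow]
        congr 2
        simp only [δ]
        field_simp
    _ = μ.real (ball p (δ * ρ / (ρ + R))) := by
        rw [measureReal_def μ (ball p _), Measure.addHaar_ball_of_pos μ p (by positivity),
          ENNReal.toReal_mul, ENNReal.toReal_ofReal (by positivity), measureReal_def]
    _ ≤ _ := measureReal_mono hsub hfin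

end Measure

theorem stmt3 (d : ℕ) (hd : 1 ≤ d) (B₀ : Set (EuclideanSpace ℝ (Fin d)))
    (hB : Bornology.IsBounded B₀) (hconv : Convex ℝ B₀)
    (hpos : 0 < volume B₀) :
    0 < ⨅ p : {p : EuclideanSpace ℝ (Fin d) × EuclideanSpace ℝ (Fin d) //
        p.1 ∈ B₀ ∧ p.2 ∈ B₀ ∧ p.1 ≠ p.2},
      (volume (({p.val.1} ∪
          {w | InnerProductGeometry.angle (w - p.val.1) (p.val.2 - p.val.1) ≤ π / 12})
          ∩ closedBall p.val.1 ‖p.val.2 - p.val.1‖ ∩ B₀)).toReal /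
        ‖p.val.2 - p.val.1‖ ^ d := by
  obtain ⟨z, hz⟩ := hconv.interior_nonempty_of_measure_ne_zero volume hpos.ne'
  obtain ⟨ρ, hρ, hball⟩ := isOpen_iff.1 isOpen_interior z hz
  replace hball := hball.trans interior_subset
  obtain ⟨R, hR⟩ := hB.subset_closedBall z
  have hR₀ : 0 ≤ R := by simpa using hR (hball (mem_ball_self hρ))
  have : Nonempty (Fin d) := ⟨⟨0, hd⟩⟩
  obtain ⟨x₀, hx₀, y₀, hy₀, hxy₀⟩ :=
    Set.not_subsingleton_iff.1 fun hsub => hpos.ne' (hsub.measure_zero volume)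
  have : Nonempty {p : EuclideanSpace ℝ (Fin d) × EuclideanSpace ℝ (Fin d) //
      p.1 ∈ B₀ ∧ p.2 ∈ B₀ ∧ p.1 ≠ p.2} := ⟨⟨(x₀, y₀), hx₀, hy₀, hxy₀⟩⟩
  have hsin : 0 < sin (π / 12) := sin_pos_of_pos_of_lt_pi (by positivity) (by linarith [pi_pos])
  have hV : 0 < volume.real (ball (0 : EuclideanSpace ℝ (Fin d)) 1) :=
    ENNReal.toReal_pos (measure_ball_pos _ _ one_pos).ne' measure_ball_lt_top.ne
  have hc : 0 < (ρ * sin (π / 12) / (2 * (ρ + R))) ^ d *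
      volume.real (ball (0 : EuclideanSpace ℝ (Fin d)) 1) := by positivity
  refine hc.trans_le (le_ciInf fun p => ?_)
  obtain ⟨⟨x, y⟩, hx, hy, hxy⟩ := p
  rw [le_div_iff₀ (pow_pos (norm_pos_iff.2 (sub_ne_zero.2 hxy.symm)) d), ← measureReal_def]
  simpa only [finrank_euclideanSpace_fin] using
    hconv.le_measureReal_cone_inter_closedBall_inter volume (θ := π / 12) hρ hball hR
      (by positivity) (by linarith [pi_pos]) hx hy hxy
end
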